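/- In the strengthened form of Carlson's theorem: for every meager set F ⊆ 2^ω there exists a meager set F' ⊆ 2^ω such that for every countable family {x_i : i ∈ ω} ⊆ 2^ω there is an x ∈ 2^ω such that ⋃_{i ∈ ω} ((2^ω \ F') + x_i) ⊆ (2^ω \ F) + x. -/
import Mathlib

open Set

private abbrev XX := ℕ → ZMod 2

private def cyl (z : XX) (n : ℕ) : Set XX := {y | ∀ m < n, y m = z m}

private lemma mem_cyl_self (z : XX) (n : ℕ) : z ∈ cyl z n := fun _ _ => rfl

private lemma cyl_sub {a b : XX} {n1 n2 : ℕ} (h : n1 ≤ n2)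
    (hab : ∀ m < n1, a m = b m) : cyl a n2 ⊆ cyl b n1 :=
  fun _ hy m hm => (hy m (lt_of_lt_of_le hm h)).trans (hab m hm)

private lemma cyl_basis {U : Set XX} (hU : IsOpen U) {z : XX} (hz : z ∈ U) :
    ∃ n, cyl z n ⊆ U := by
  have h : U ∈ nhds z := hU.mem_nhds hz
  rw [nhds_pi, Filter.mem_pi] at h
  obtain ⟨I, hIfin, t, ht, hsub⟩ := h
  obtain ⟨N, hN⟩ := hIfin.bddAbove
  refine ⟨N + 1, fun y hy => hsub fun i hi => ?_⟩
  have : y i = z i := hy i (Nat.lt_succ_of_le (hN hi))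
  rw [this]
  exact mem_of_mem_nhds (ht i)

private lemma ext_lemma {C : Set XX} (hC : IsNowhereDense C) (z : XX) (n : ℕ) :
    ∃ z' n', n ≤ n' ∧ (∀ m < n, z' m = z m) ∧ ∀ y ∈ cyl z' n', y ∉ C := by
  have hdense : Dense (closure C)ᶜ := by
    rw [← interior_eq_empty_iff_dense_compl]
    have h := hC.closure
    unfold IsNowhereDense at h
    rwa [closure_closure] at h
  have hopen : IsOpen (cyl z n) := by
    have : cyl z n = Set.pi (Set.Iio n) (fun m => {z m}) := by
      ext y; simp [cyl, Set.mem_pi]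
    rw [this]
    exact isOpen_set_pi (Set.finite_Iio n) (fun _ _ => isOpen_discrete _)
  obtain ⟨z', hz'⟩ := dense_iff_inter_open.1 hdense (cyl z n) hopen ⟨z, mem_cyl_self z n⟩
  obtain ⟨n0, hn0⟩ := cyl_basis (isOpen_compl_iff.2 isClosed_closure) hz'.2
  refine ⟨z', max n n0, le_max_left _ _, fun m hm => hz'.1 m hm, fun y hy hyC => ?_⟩
  exact hn0 (cyl_sub (le_max_right n n0) (fun _ _ => rfl) hy) (subset_closure hyC)

private def patch (n : ℕ) (u w : XX) : XX := fun m => if m < n then u m else w m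

private lemma patch_lt {n m : ℕ} (u w : XX) (h : m < n) : patch n u w m = u m := if_pos h

private lemma patch_ge {n m : ℕ} (u w : XX) (h : ¬ m < n) : patch n u w m = w m := if_neg h

private lemma stage (C : ℕ → Set XX) (hC : ∀ j, IsNowhereDense (C j)) (k n : ℕ) (w : XX) :
    ∃ n' w', n < n' ∧ (∀ m < n, w' m = w m) ∧
      ∀ (u : XX) (j : ℕ), j ≤ k → ∀ y ∈ cyl (patch n u w') n', y ∉ C j := by
  have main : ∀ s : Finset ((Fin n → ZMod 2) × Fin (k + 1)),
      ∃ n' w', n ≤ n' ∧ (∀ m < n, w' m = w m) ∧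
        ∀ p ∈ s, ∀ y ∈ cyl (patch n (fun m => if h : m < n then p.1 ⟨m, h⟩ else 0) w') n',
          y ∉ C p.2 := by
    intro s
    induction s using Finset.induction_on with
    | empty => exact ⟨n, w, le_refl n, fun _ _ => rfl, by simp⟩
    | @insert p s hps ih =>
      obtain ⟨n1, w1, hn1, hw1, hold⟩ := ih
      set u0 : XX := fun m => if h : m < n then p.1 ⟨m, h⟩ else 0 with hu0
      obtain ⟨z', n2, hn2, hz', hnew⟩ := ext_lemma (hC p.2) (patch n u0 w1) n1
      refine ⟨n2, fun m => if m < n then w1 m else z' m, le_trans hn1 hn2, ?_, ?_⟩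
      · intro m hm; simp only [if_pos hm]; exact hw1 m hm
      · intro q hq y hy
        have hagree : ∀ m < n1,
            patch n (fun m => if h : m < n then q.1 ⟨m, h⟩ else 0)
              (fun m => if m < n then w1 m else z' m) m
            = patch n (fun m => if h : m < n then q.1 ⟨m, h⟩ else 0) w1 m := by
          intro m hm
          by_cases h : m < n
          · rw [patch_lt _ _ h, patch_lt _ _ h]
          · rw [patch_ge _ _ h, patch_ge _ _ h, if_neg h]
            exact (hz' m hm).trans (patch_ge _ _ h)
        rcases Finset.mem_insert.1 hq with rfl | hq
        · -- new pair: the patched function equals z'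
          have heq : patch n u0 (fun m => if m < n then w1 m else z' m) = z' := by
            funext m
            by_cases h : m < n
            · rw [patch_lt _ _ h]
              exact ((hz' m (lt_of_lt_of_le h hn1)).trans (patch_lt _ _ h)).symm
            · rw [patch_ge _ _ h, if_neg h]
          rw [← hu0, heq] at hy
          exact hnew y hy
        · exact hold q hq y (cyl_sub hn2 hagree hy)
  obtain ⟨n1, w1, hn1, hw1, h⟩ := main Finset.univ
  refine ⟨max n1 (n + 1), w1, lt_of_lt_of_le (Nat.lt_succ_self n) (le_max_right _ _), hw1, ?_⟩
  intro u j hj y hy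
  have := h ((fun i : Fin n => u i), ⟨j, Nat.lt_succ_of_le hj⟩) (Finset.mem_univ _)
  have heq : patch n (fun m => if h : m < n then u m else 0) w1 = patch n u w1 := by
    funext m; by_cases h : m < n
    · rw [patch_lt _ _ h, patch_lt _ _ h, dif_pos h]
    · rw [patch_ge _ _ h, patch_ge _ _ h]
  rw [heq] at this
  exact this y (cyl_sub (le_max_left _ _) (fun _ _ => rfl) hy)

private lemma key (C : ℕ → Set XX) (hC : ∀ j, IsNowhereDense (C j)) :
    ∃ (n : ℕ → ℕ) (z : XX), n 0 = 0 ∧ StrictMono n ∧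
      ∀ y j, (∀ N, ∃ k, N ≤ k ∧ ∀ m, n k ≤ m → m < n (k + 1) → y m = z m) → y ∉ C j := by
  choose n' w' h1 h2 h3 using stage C hC
  set S : ℕ → ℕ × XX := fun k => Nat.rec ((0 : ℕ), (fun _ => 0 : XX))
    (fun k p => (n' k p.1 p.2, w' k p.1 p.2)) k with hS
  set nn : ℕ → ℕ := fun k => (S k).1 with hnn
  set ww : ℕ → XX := fun k => (S k).2 with hww
  have hsucc1 : ∀ k, nn (k + 1) = n' k (nn k) (ww k) := fun k => rfl
  have hsucc2 : ∀ k, ww (k + 1) = w' k (nn k) (ww k) := fun k => rfl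
  have hmono : StrictMono nn := strictMono_nat_of_lt_succ (fun k => h1 k (nn k) (ww k))
  have hagree : ∀ k l, k ≤ l → ∀ m < nn k, ww l m = ww k m := by
    intro k l hkl
    induction l, hkl using Nat.le_induction with
    | base => intro m _; rfl
    | succ l hkl ih =>
      intro m hm
      rw [hsucc2 l, h2 l (nn l) (ww l) m (lt_of_lt_of_le hm (hmono.monotone hkl))]
      exact ih m hm
  set z : XX := fun m => ww (m + 1) m with hz
  have hzw : ∀ k m, m < nn (k + 1) → z m = ww (k + 1) m := by
    intro k m hm
    rcases le_or_gt (k + 1) (m + 1) with h | h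
    · exact hagree (k + 1) (m + 1) h m hm
    · have hmk : m < nn (m + 1) := lt_of_lt_of_le (Nat.lt_succ_self m)
        (hmono.le_apply)
      exact (hagree (m + 1) (k + 1) h.le m hmk).symm
  refine ⟨nn, z, rfl, hmono, ?_⟩
  intro y j hy hyC
  obtain ⟨k, hk, hk2⟩ := hy j
  have hmem : y ∈ cyl (patch (nn k) y (ww (k + 1))) (nn (k + 1)) := by
    intro m hm
    by_cases h : m < nn k
    · rw [patch_lt _ _ h]
    · rw [patch_ge _ _ h, ← hzw k m hm]
      exact hk2 m (le_of_not_gt h) hm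
  exact h3 k (nn k) (ww k) y j hk y hmem hyC

theorem stmt_18 (F : Set (ℕ → ZMod 2)) (hF : IsMeagre F) :
    ∃ F' : Set (ℕ → ZMod 2), IsMeagre F' ∧
      ∀ xs : ℕ → (ℕ → ZMod 2), ∃ x : ℕ → ZMod 2,
        (⋃ i : ℕ, (· + xs i) '' F'ᶜ) ⊆ (· + x) '' Fᶜ := by
  -- decompose F into countably many nowhere dense sets
  obtain ⟨S, hSnwd, hScount, hSsub⟩ := isMeagre_iff_countable_union_isNowhereDense.1 hF
  obtain ⟨f, hf⟩ := (hScount.insert ∅).exists_eq_range (insert_nonempty _ _)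
  have hC : ∀ j, IsNowhereDense (f j) := by
    intro j
    have : f j ∈ insert (∅ : Set XX) S := hf ▸ mem_range_self j
    rcases this with h | h
    · rw [h]; exact isNowhereDense_empty
    · exact hSnwd _ h
  have hFsub : F ⊆ ⋃ j, f j := by
    intro y hy
    obtain ⟨t, htS, hyt⟩ := hSsub hy
    have : t ∈ range f := hf ▸ subset_insert _ _ htS
    obtain ⟨j, rfl⟩ := this
    exact mem_iUnion.2 ⟨j, hyt⟩
  obtain ⟨n, z, hn0, hmono, hkey⟩ := key f hC
  -- K m : the index of the interval containing m
  set K : ℕ → ℕ := fun m => Nat.findGreatest (fun k => n k ≤ m) m with hK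
  have hK1 : ∀ m, n (K m) ≤ m := by
    intro m
    exact Nat.findGreatest_spec (P := fun k => n k ≤ m) (Nat.zero_le m)
      (show n 0 ≤ m by rw [hn0]; exact Nat.zero_le m)
  have hK2 : ∀ m, m < n (K m + 1) := by
    intro m
    by_contra h
    push_neg at h
    exact Nat.findGreatest_is_greatest (Nat.lt_succ_self (K m))
      (le_trans hmono.le_apply h) h
  have hKuniq : ∀ k m, n k ≤ m → m < n (k + 1) → K m = k := by
    intro k m h1 h2
    rcases lt_trichotomy (K m) k with h | h | h
    · exact absurd (lt_of_le_of_lt (le_trans (hmono.monotone h) h1) (hK2 m))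
        (lt_irrefl _)
    · exact h
    · exact absurd (lt_of_le_of_lt (le_trans (hmono.monotone h) (hK1 m)) h2)
        (lt_irrefl _)
  -- the comeagre set G
  set G : Set XX := ⋂ (j : ℕ) (N : ℕ),
    {y : XX | ∃ k, N ≤ k ∧ (Nat.unpair k).1 = j ∧ ∀ m, n k ≤ m → m < n (k + 1) → y m = 0}
    with hG
  have hGres : G ∈ residual XX := by
    refine countable_iInter_mem.2 fun j => countable_iInter_mem.2 fun N => ?_
    refine residual_of_dense_open ?_ ?_
    · -- open
      have : {y : XX | ∃ k, N ≤ k ∧ (Nat.unpair k).1 = j ∧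
          ∀ m, n k ≤ m → m < n (k + 1) → y m = 0}
          = ⋃ (k : ℕ) (_ : N ≤ k ∧ (Nat.unpair k).1 = j),
            Set.pi (Set.Ico (n k) (n (k + 1))) (fun _ => {0}) := by
        ext y
        simp only [mem_setOf_eq, mem_iUnion, Set.mem_pi, Set.mem_Ico, mem_singleton_iff]
        constructor
        · rintro ⟨k, h1, h2, h3⟩; exact ⟨k, ⟨h1, h2⟩, fun m hm => h3 m hm.1 hm.2⟩
        · rintro ⟨k, ⟨h1, h2⟩, h3⟩; exact ⟨k, h1, h2, fun m hm1 hm2 => h3 m ⟨hm1, hm2⟩⟩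
      rw [this]
      exact isOpen_iUnion fun k => isOpen_iUnion fun _ =>
        isOpen_set_pi (Set.finite_Ico _ _) (fun _ _ => isOpen_discrete _)
    · -- dense
      rw [dense_iff_inter_open]
      intro V hV ⟨v, hv⟩
      obtain ⟨n0, hn0V⟩ := cyl_basis hV hv
      set k := Nat.pair j (max N n0) with hk
      have hkN : N ≤ k := le_trans (le_max_left _ _) (Nat.right_le_pair _ _)
      have hkn0 : n0 ≤ n k := le_trans (le_max_right N n0)
        (le_trans (Nat.right_le_pair _ _) hmono.le_apply)
      refine ⟨fun m => if m < n0 then v m else 0, hn0V (fun m hm => by simp [hm]), ?_⟩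
      refine ⟨k, hkN, by rw [hk, Nat.unpair_pair], fun m hm1 _ => ?_⟩
      simp [Nat.not_lt.2 (le_trans hkn0 hm1)]
  refine ⟨Gᶜ, by rwa [IsMeagre, compl_compl], ?_⟩
  intro xs
  refine ⟨fun m => xs ((Nat.unpair (K m)).1) m + z m, ?_⟩
  intro y hy
  simp only [mem_iUnion, mem_image] at hy ⊢
  obtain ⟨i, g, hg, rfl⟩ := hy
  rw [compl_compl] at hg
  set x : XX := fun m => xs ((Nat.unpair (K m)).1) m + z m with hx
  have habc : ∀ a b : ZMod 2, a + (a + b) = b := by decide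
  refine ⟨g + xs i + x, ?_, ?_⟩
  · -- g + xs i + x ∉ F
    intro hmem
    obtain ⟨j, hj⟩ := mem_iUnion.1 (hFsub hmem)
    refine hkey (g + xs i + x) j ?_ hj
    intro N
    have hgN := hg
    rw [hG] at hgN
    obtain ⟨k, hk1, hk2, hk3⟩ := mem_iInter.1 (mem_iInter.1 hgN i) N
    refine ⟨k, hk1, fun m hm1 hm2 => ?_⟩
    have hKm : K m = k := hKuniq k m hm1 hm2
    show g m + xs i m + x m = z m
    rw [hx]
    simp only [hKm, hk2]
    rw [hk3 m hm1 hm2, zero_add, habc]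
  · -- (g + xs i + x) + x = g + xs i
    funext m
    show g m + xs i m + x m + x m = g m + xs i m
    have : ∀ a b : ZMod 2, a + b + b = a := by decide
    rw [this]
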